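/- arXiv:1704.00937 — 2 statements merged into one kernel-verified Lean document; each statement's English description precedes it below -/
import Mathlib

section
/- If G is a graph and H is a minor of G, and H has at least one edge, then l(H) ≤ l(G). -/
/-- The transformation of `{1,…,n}` sending `a` to `b` and fixing all other points. -/
def arcT {n : ℕ} (a b : Fin n) : Fin n → Fin n := fun v => if v = a then b else v

/-- The semigroup `⟨D⟩` generated by the arcs of the digraph `D`; transformations act on
the right, so a product `ε₁ε₂⋯ε_k` is the function `ε_k ∘ ⋯ ∘ ε₁`. -/
def genSg {n : ℕ} (D : Set (Fin n × Fin n)) : Set (Fin n → Fin n) :=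
  { α | ∃ l : List (Fin n × Fin n), l ≠ [] ∧ (∀ p ∈ l, p ∈ D) ∧
      α = l.foldl (fun f p => arcT p.1 p.2 ∘ f) id }

/-- The product `x·y` in the right-action convention: apply `x` first, then `y`. -/
def sgMul {n : ℕ} (x y : Fin n → Fin n) : Fin n → Fin n := y ∘ x

/-- The right ideal `xS¹ = {x} ∪ xS`. -/
def rIdeal {n : ℕ} (S : Set (Fin n → Fin n)) (x : Fin n → Fin n) : Set (Fin n → Fin n) :=
  insert x { y | ∃ s ∈ S, y = sgMul x s }

/-- The left ideal `S¹x = {x} ∪ Sx`. -/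
def lIdeal {n : ℕ} (S : Set (Fin n → Fin n)) (x : Fin n → Fin n) : Set (Fin n → Fin n) :=
  insert x { y | ∃ s ∈ S, y = sgMul s x }

/-- The two-sided ideal `S¹xS¹`. -/
def jIdeal {n : ℕ} (S : Set (Fin n → Fin n)) (x : Fin n → Fin n) : Set (Fin n → Fin n) :=
  { y | ∃ s ∈ insert id S, ∃ t ∈ insert id S, y = sgMul s (sgMul x t) }

def RRel {n : ℕ} (S : Set (Fin n → Fin n)) (x y : Fin n → Fin n) : Prop :=
  rIdeal S x = rIdeal S y

def LRel {n : ℕ} (S : Set (Fin n → Fin n)) (x y : Fin n → Fin n) : Prop :=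
  lIdeal S x = lIdeal S y

def JRel {n : ℕ} (S : Set (Fin n → Fin n)) (x y : Fin n → Fin n) : Prop :=
  jIdeal S x = jIdeal S y

def RTrivial {n : ℕ} (S : Set (Fin n → Fin n)) : Prop :=
  ∀ x ∈ S, ∀ y ∈ S, RRel S x y → x = y

def LTrivial {n : ℕ} (S : Set (Fin n → Fin n)) : Prop :=
  ∀ x ∈ S, ∀ y ∈ S, LRel S x y → x = y

def HTrivial {n : ℕ} (S : Set (Fin n → Fin n)) : Prop :=
  ∀ x ∈ S, ∀ y ∈ S, RRel S x y → LRel S x y → x = y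

def JTrivial {n : ℕ} (S : Set (Fin n → Fin n)) : Prop :=
  ∀ x ∈ S, ∀ y ∈ S, JRel S x y → x = y

/-- `α` has a cycle of length `k`: `k` distinct points `a₀,…,a_{k-1}` with
`α(aᵢ) = a_{i+1 mod k}`. -/
def IsCycleOf {n : ℕ} (α : Fin n → Fin n) (k : ℕ) : Prop :=
  0 < k ∧ ∃ a : ZMod k → Fin n, Function.Injective a ∧ ∀ i, α (a i) = a (i + 1)

/-- `l(D)`: the maximal length of a cycle of an element of `⟨D⟩`. -/
noncomputable def lD {n : ℕ} (D : Set (Fin n × Fin n)) : ℕ :=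
  sSup { k | ∃ α ∈ genSg D, IsCycleOf α k }

/-- The arc set of a graph. -/
def arcsOf {n : ℕ} (G : SimpleGraph (Fin n)) : Set (Fin n × Fin n) :=
  { p | G.Adj p.1 p.2 }

/-- `l(G)` for a graph `G`. -/
noncomputable def lG {n : ℕ} (G : SimpleGraph (Fin n)) : ℕ := lD (arcsOf G)

/-- Reachability along directed walks of `D`. -/
def dreach {n : ℕ} (D : Set (Fin n × Fin n)) : Fin n → Fin n → Prop :=
  Relation.ReflTransGen (fun a b => (a, b) ∈ D)

/-- The strong component of the vertex `v`. -/
def strongComp {n : ℕ} (D : Set (Fin n × Fin n)) (v : Fin n) : Set (Fin n) :=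
  { u | dreach D u v ∧ dreach D v u }

/-- The underlying graph of the digraph `D`. -/
def underlying {n : ℕ} (D : Set (Fin n × Fin n)) : SimpleGraph (Fin n) where
  Adj a b := a ≠ b ∧ ((a, b) ∈ D ∨ (b, a) ∈ D)
  symm := ⟨fun a b h => ⟨h.1.symm, h.2.symm⟩⟩
  loopless := ⟨fun a h => h.1 rfl⟩

/-- `v 0, v 1, …, v r` is a cycle of the digraph `D`. -/
def IsDCycle {n : ℕ} (D : Set (Fin n × Fin n)) (r : ℕ) (v : ℕ → Fin n) : Prop :=
  1 ≤ r ∧ v r = v 0 ∧ (∀ i < r, ∀ j < r, v i = v j → i = j) ∧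
    ∀ i < r, (v i, v (i + 1)) ∈ D

def HasDCycle {n : ℕ} (D : Set (Fin n × Fin n)) : Prop := ∃ r v, IsDCycle D r v

def DAcyclic {n : ℕ} (D : Set (Fin n × Fin n)) : Prop := ¬ HasDCycle D

/-- `G` is a subgroup contained in the transformation semigroup `S`. -/
def IsSubgroupIn {n : ℕ} (S G : Set (Fin n → Fin n)) : Prop :=
  G ⊆ S ∧ (∀ x ∈ G, ∀ y ∈ G, sgMul x y ∈ G) ∧
    ∃ e ∈ G, (∀ x ∈ G, sgMul e x = x ∧ sgMul x e = x) ∧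
      ∀ x ∈ G, ∃ y ∈ G, sgMul x y = e ∧ sgMul y x = e

/-- Every subgroup of `S` is trivial. -/
def SgAperiodic {n : ℕ} (S : Set (Fin n → Fin n)) : Prop :=
  ∀ G, IsSubgroupIn S G → G.Subsingleton

/-- `H` is a minor of `G`: there are disjoint nonempty connected branch sets in `G`,
one for each vertex of `H`, with an edge of `G` between the branch sets of any two
adjacent vertices of `H`. -/
def IsMinorOf {m n : ℕ} (H : SimpleGraph (Fin m)) (G : SimpleGraph (Fin n)) : Prop :=
  ∃ B : Fin m → Set (Fin n),
    (∀ v, (B v).Nonempty) ∧ (∀ v, (G.induce (B v)).Connected) ∧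
    (∀ u v, u ≠ v → Disjoint (B u) (B v)) ∧
    (∀ u v, H.Adj u v → ∃ a ∈ B u, ∃ b ∈ B v, G.Adj a b)


/-!
Choose a representative `r v` in the branch set `B v` of each vertex `v` of `H`. An arc `u → v`
of `H` is simulated in `G` by the arcs of a path from `r u` through `B u`, across an edge of `G`
joining `B u` to `B v`, and on through `B v` to `r v`. Each arc of this word starts in `B u`, or
in `B v` away from `r v`, so the word sends `r u` to `r v` and fixes every other representative.
Hence the injection `r` semiconjugates each element of `⟨H⟩` to an element of `⟨G⟩`, and carries
its cycles to cycles of the same length.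
-/

open Function

section

variable {m n : ℕ}

lemma arcT_apply_self (a b : Fin n) : arcT a b a = b := if_pos rfl

lemma arcT_apply_of_ne {a b v : Fin n} (h : v ≠ a) : arcT a b v = v := if_neg h

def evalWord (L : List (Fin n × Fin n)) : Fin n → Fin n :=
  L.foldl (fun f p => arcT p.1 p.2 ∘ f) id

lemma foldl_arcT_comp (L : List (Fin n × Fin n)) (g : Fin n → Fin n) :
    L.foldl (fun f p => arcT p.1 p.2 ∘ f) g = evalWord L ∘ g := by
  induction L generalizing g with
  | nil => rfl
  | cons e L ih =>
    rw [List.foldl_cons, ih]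
    conv_rhs => rw [evalWord, List.foldl_cons, ih]
    rfl

lemma evalWord_cons (e : Fin n × Fin n) (L : List (Fin n × Fin n)) :
    evalWord (e :: L) = evalWord L ∘ arcT e.1 e.2 :=
  foldl_arcT_comp L _

lemma evalWord_append (L₁ L₂ : List (Fin n × Fin n)) :
    evalWord (L₁ ++ L₂) = evalWord L₂ ∘ evalWord L₁ := by
  rw [evalWord, List.foldl_append, foldl_arcT_comp]; rfl

lemma evalWord_apply_of_forall_ne {L : List (Fin n × Fin n)} {z : Fin n}
    (h : ∀ e ∈ L, e.1 ≠ z) : evalWord L z = z := by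
  induction L with
  | nil => rfl
  | cons e L ih =>
    rw [evalWord_cons, comp_apply, arcT_apply_of_ne (h e List.mem_cons_self).symm]
    exact ih fun e' he' => h e' (List.mem_cons_of_mem _ he')

lemma IsCycleOf.le {α : Fin n → Fin n} {k : ℕ} (h : IsCycleOf α k) : k ≤ n := by
  obtain ⟨hk, a, ha, -⟩ := h
  have : NeZero k := ⟨hk.ne'⟩
  simpa using Fintype.card_le_of_injective a ha

lemma IsCycleOf.of_semiconj {α : Fin m → Fin m} {β : Fin n → Fin n} {r : Fin m → Fin n}
    (hr : Injective r) (hrαβ : Semiconj r α β) {k : ℕ} (h : IsCycleOf α k) :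
    IsCycleOf β k := by
  obtain ⟨hk, a, ha, hcyc⟩ := h
  exact ⟨hk, r ∘ a, hr.comp ha, fun i => by simp only [comp_apply, ← hrαβ.eq, hcyc]⟩

lemma exists_evalWord_semiconj {D : Set (Fin m × Fin m)} {E : Set (Fin n × Fin n)}
    {r : Fin m → Fin n}
    (hsim : ∀ p ∈ D, ∃ W ≠ [], (∀ e ∈ W, e ∈ E) ∧ Semiconj r (arcT p.1 p.2) (evalWord W))
    {ℓ : List (Fin m × Fin m)} (hℓ : ∀ p ∈ ℓ, p ∈ D) :
    ∃ W, (ℓ ≠ [] → W ≠ []) ∧ (∀ e ∈ W, e ∈ E) ∧ Semiconj r (evalWord ℓ) (evalWord W) := by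
  induction ℓ with
  | nil => exact ⟨[], fun h => absurd rfl h, by simp, Semiconj.id_right⟩
  | cons p ℓ ih =>
    obtain ⟨W₁, hW₁, hW₁E, hsem₁⟩ := hsim p (hℓ p List.mem_cons_self)
    obtain ⟨W₂, -, hW₂E, hsem₂⟩ := ih fun q hq => hℓ q (List.mem_cons_of_mem _ hq)
    refine ⟨W₁ ++ W₂, fun _ => by simp [hW₁], ?_, ?_⟩
    · simpa only [List.mem_append] using fun e he => he.elim (hW₁E e) (hW₂E e)
    · rw [evalWord_cons, evalWord_append]
      exact hsem₂.comp_right hsem₁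

lemma lD_le_lD_of_semiconj {D : Set (Fin m × Fin m)} {E : Set (Fin n × Fin n)}
    {r : Fin m → Fin n} (hr : Injective r)
    (hsim : ∀ p ∈ D, ∃ W ≠ [], (∀ e ∈ W, e ∈ E) ∧ Semiconj r (arcT p.1 p.2) (evalWord W)) :
    lD D ≤ lD E := by
  -- no nonemptiness is needed: `sSup ∅ = 0` in `ℕ`
  refine csSup_le_csSup' ⟨n, fun k ⟨_, _, hk⟩ => hk.le⟩ ?_
  rintro k ⟨_, ⟨ℓ, hℓ, hℓD, rfl⟩, hk⟩
  obtain ⟨W, hW, hWE, hsem⟩ := exists_evalWord_semiconj hsim hℓD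
  exact ⟨evalWord W, ⟨W, hW hℓ, hWE, rfl⟩, hk.of_semiconj hr hsem⟩

lemma SimpleGraph.Walk.IsPath.exists_evalWord_eq {G : SimpleGraph (Fin n)} {S : Set (Fin n)}
    {x y : S} {p : (G.induce S).Walk x y} (hp : p.IsPath) :
    ∃ L : List (Fin n × Fin n), (∀ e ∈ L, G.Adj e.1 e.2 ∧ e.1 ∈ S ∧ e.1 ≠ y) ∧
      evalWord L x = y := by
  induction p with
  | nil => exact ⟨[], by simp, rfl⟩
  | @cons a c b hac q ih =>
    have hab : a ≠ b := fun h => ((cons_isPath_iff _ _).mp hp).2 (h ▸ q.end_mem_support)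
    obtain ⟨L, hL, hLy⟩ := ih hp.of_cons
    refine ⟨((a : Fin n), (c : Fin n)) :: L, ?_, ?_⟩
    · simpa only [List.mem_cons, forall_eq_or_imp] using
        ⟨⟨hac, a.2, fun h => hab (Subtype.ext h)⟩, hL⟩
    · rw [evalWord_cons, comp_apply, arcT_apply_self, hLy]

lemma exists_evalWord_eq_of_adj_sets {G : SimpleGraph (Fin n)} {S T : Set (Fin n)}
    (hS : (G.induce S).Connected) (hT : (G.induce T).Connected)
    {x y : Fin n} (hx : x ∈ S) (hy : y ∈ T) {a b : Fin n} (ha : a ∈ S) (hb : b ∈ T)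
    (hab : G.Adj a b) :
    ∃ L : List (Fin n × Fin n), L ≠ [] ∧
      (∀ e ∈ L, G.Adj e.1 e.2 ∧ (e.1 ∈ S ∨ e.1 ∈ T ∧ e.1 ≠ y)) ∧ evalWord L x = y := by
  obtain ⟨p⟩ := hS.preconnected ⟨x, hx⟩ ⟨a, ha⟩
  obtain ⟨q⟩ := hT.preconnected ⟨b, hb⟩ ⟨y, hy⟩
  obtain ⟨L₁, hL₁, hL₁a⟩ := p.toPath.2.exists_evalWord_eq
  obtain ⟨L₂, hL₂, hL₂y⟩ := q.toPath.2.exists_evalWord_eq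
  refine ⟨L₁ ++ (a, b) :: L₂, by simp, ?_, ?_⟩
  · simp only [List.mem_append, List.mem_cons]
    rintro e (he | rfl | he)
    · exact ⟨(hL₁ e he).1, .inl (hL₁ e he).2.1⟩
    · exact ⟨hab, .inl ha⟩
    · exact ⟨(hL₂ e he).1, .inr (hL₂ e he).2⟩
  · rw [evalWord_append, comp_apply, hL₁a, evalWord_cons, comp_apply, arcT_apply_self, hL₂y]

lemma IsMinorOf.exists_semiconj {H : SimpleGraph (Fin m)} {G : SimpleGraph (Fin n)}
    (hminor : IsMinorOf H G) :
    ∃ r : Fin m → Fin n, Injective r ∧ ∀ p ∈ arcsOf H,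
      ∃ W ≠ [], (∀ e ∈ W, e ∈ arcsOf G) ∧ Semiconj r (arcT p.1 p.2) (evalWord W) := by
  obtain ⟨B, hne, hconn, hdisj, hadj⟩ := hminor
  choose r hr using hne
  have hrB : ∀ {u w}, r w ∈ B u → w = u := fun {u w} h =>
    by_contra fun hwu => Set.disjoint_left.mp (hdisj w u hwu) (hr w) h
  refine ⟨r, fun u w h => (hrB (h ▸ hr u)).symm, ?_⟩
  rintro ⟨u, v⟩ huv
  obtain ⟨a, ha, b, hb, hab⟩ := hadj u v huv
  obtain ⟨W, hW, hWG, hWu⟩ :=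
    exists_evalWord_eq_of_adj_sets (hconn u) (hconn v) (hr u) (hr v) ha hb hab
  refine ⟨W, hW, fun e he => (hWG e he).1, fun w => ?_⟩
  obtain rfl | hwu := eq_or_ne w u
  · rw [arcT_apply_self, hWu]
  · rw [arcT_apply_of_ne hwu]
    refine (evalWord_apply_of_forall_ne fun e he hew => ?_).symm
    rcases (hWG e he).2 with heu | ⟨hev, hey⟩
    · exact hwu (hrB (hew ▸ heu))
    · exact hey (hew.trans (congrArg r (hrB (hew ▸ hev))))

end

theorem stmt3_general {m n : ℕ} (H : SimpleGraph (Fin m)) (G : SimpleGraph (Fin n))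
    (hminor : IsMinorOf H G) : lG H ≤ lG G := by
  obtain ⟨r, hr, hsim⟩ := hminor.exists_semiconj
  exact lD_le_lD_of_semiconj hr hsim

/-- If `H` is a minor of `G` with at least one edge, then `l(H) ≤ l(G)`. -/
theorem stmt3 {m n : ℕ} (H : SimpleGraph (Fin m)) (G : SimpleGraph (Fin n))
    (hminor : IsMinorOf H G) (hedge : ∃ u v, H.Adj u v) : lG H ≤ lG G :=
  stmt3_general H G hminor
end

section
/- Let G be a connected graph with t vertices of degree not equal to 2. Then l(G) ≥ (t−2)/4 + 1. -/
/-!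
Grow a connected vertex set `C` one vertex at a time. The vertices outside `C` adjacent to `C`
(the boundary) behave like leaves of a spanning tree: carrying a point along a path through `C`
moves one boundary vertex to another while fixing every other point outside `C`, and chaining
such moves rotates all but one of `b` boundary vertices, so `l(G) ≥ b - 1`.

To make `b` large, weigh `C` by `4 b - #{vertices of degree ≠ 2 in C or on its boundary}
- #{live boundary vertices}`, where a boundary vertex is live if it has a neighbour not yet
reached. Some insertion of one or two boundary vertices never decreases this potential (the only
delicate case is a chain through a vertex `w` of degree `≠ 2`, where `w` has a second boundary
neighbour that stops being live), a vertex of maximum degree starts it at `6` or more (by parity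
in the cubic case), and once everything is reached it equals `4 b - t`. Hence
`4 (b - 1) ≥ t + 2`.
-/

open Set Relation

/-- First move `x m` to `x (m + 1)`, then `x (m - 1)` to `x m`, and so on. -/
lemma exists_shift {α : Type*} {S : Set (α → α)} {X : Set α} (hS : ∀ f ∈ S, ∀ g ∈ S, g ∘ f ∈ S)
    (hmove : ∀ a ∈ X, ∀ b ∈ X, ∃ f ∈ S, f a = b ∧ ∀ z ∈ X, z ≠ a → f z = z)
    (m : ℕ) {x : ℕ → α} (hX : ∀ i ≤ m + 1, x i ∈ X) (hx : InjOn x (Iic (m + 1))) :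
    ∃ f ∈ S, (∀ i ≤ m, f (x i) = x (i + 1)) ∧ ∀ z ∈ X, (∀ i ≤ m, z ≠ x i) → f z = z := by
  induction m with
  | zero =>
    obtain ⟨f, hfS, hf, hfix⟩ := hmove _ (hX 0 (by omega)) _ (hX 1 le_rfl)
    exact ⟨f, hfS, fun i hi => by simp_all, fun z hz hz0 => hfix z hz (hz0 0 le_rfl)⟩
  | succ m ih =>
    have hne : ∀ i ≤ m + 2, ∀ j ≤ m + 2, i ≠ j → x i ≠ x j :=
      fun i hi j hj hij h => hij (hx (mem_Iic.2 hi) (mem_Iic.2 hj) h)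
    obtain ⟨f, hfS, hf, hfix⟩ :=
      ih (fun i hi => hX i (by omega)) (hx.mono (Iic_subset_Iic.2 (by omega)))
    obtain ⟨g, hgS, hg, hgfix⟩ := hmove _ (hX (m + 1) (by omega)) _ (hX (m + 2) le_rfl)
    refine ⟨f ∘ g, hS g hgS f hfS, fun i hi => ?_, fun z hz hzx => ?_⟩
    · rcases Nat.lt_or_ge i (m + 1) with hi' | hi'
      · have hxi : x i ≠ x (m + 1) := hne i (by omega) (m + 1) (by omega) (by omega)
        rw [Function.comp_apply, hgfix _ (hX i (by omega)) hxi, hf i (by omega)]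
      · obtain rfl : i = m + 1 := by omega
        rw [Function.comp_apply, hg, hfix _ (hX _ le_rfl)
          fun j hj => hne _ le_rfl j (by omega) (by omega)]
    · rw [Function.comp_apply, hgfix z hz (hzx _ le_rfl), hfix z hz fun i hi => hzx i (by omega)]

lemma isCycleOf_of_apply {n : ℕ} {f : Fin n → Fin n} {k : ℕ} [NeZero k] {x : ℕ → Fin n}
    (hx : InjOn x (Iio k)) (hf : ∀ i < k, f (x i) = x ((i + 1) % k)) : IsCycleOf f k := by
  refine ⟨Nat.pos_of_neZero k, fun z => x z.val, fun z₁ z₂ h => ?_, fun z => ?_⟩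
  · exact ZMod.val_injective k (hx (ZMod.val_lt z₁) (ZMod.val_lt z₂) h)
  · change f (x z.val) = x (z + 1).val
    rw [hf _ (ZMod.val_lt z), ZMod.val_add, ZMod.val_one_eq_one_mod, Nat.add_mod_mod]

/-- Close the shift `x 0 ↦ ⋯ ↦ x k` into a `k`-cycle by moving `x k` back to `x 0`. -/
lemma exists_isCycleOf {n : ℕ} {S : Set (Fin n → Fin n)} {X : Set (Fin n)}
    (hS : ∀ f ∈ S, ∀ g ∈ S, g ∘ f ∈ S)
    (hmove : ∀ a ∈ X, ∀ b ∈ X, ∃ f ∈ S, f a = b ∧ ∀ z ∈ X, z ≠ a → f z = z)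
    {k : ℕ} (hk : 0 < k) {x : ℕ → Fin n} (hX : ∀ i ≤ k, x i ∈ X) (hx : InjOn x (Iic k)) :
    ∃ f ∈ S, IsCycleOf f k := by
  obtain ⟨m, rfl⟩ := Nat.exists_eq_add_of_lt hk
  rw [zero_add] at hX hx ⊢
  obtain ⟨f, hfS, hf, -⟩ := exists_shift hS hmove m hX hx
  obtain ⟨g, hgS, hg, hgfix⟩ := hmove _ (hX (m + 1) le_rfl) _ (hX 0 (by omega))
  refine ⟨g ∘ f, hS f hfS g hgS, isCycleOf_of_apply (hx.mono Iio_subset_Iic_self) fun i hi => ?_⟩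
  rw [Function.comp_apply, hf i (by omega)]
  rcases Nat.lt_or_ge (i + 1) (m + 1) with hi' | hi'
  · rw [Nat.mod_eq_of_lt hi', hgfix _ (hX _ (by omega))]
    exact fun h => by have := hx (mem_Iic.2 (by omega)) (mem_Iic.2 le_rfl) h; omega
  · obtain rfl : i = m := by omega
    rw [Nat.mod_self, hg]

section ArcSemigroup

variable {n : ℕ} {D : Set (Fin n × Fin n)}

lemma foldl_arcT_eq_comp (l : List (Fin n × Fin n)) (f : Fin n → Fin n) :
    l.foldl (fun g p => arcT p.1 p.2 ∘ g) f = l.foldl (fun g p => arcT p.1 p.2 ∘ g) id ∘ f := by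
  induction l generalizing f with
  | nil => rfl
  | cons p l ih => simp only [List.foldl_cons]; rw [ih, ih (arcT p.1 p.2 ∘ id)]; rfl

lemma arcT_mem_genSg {a b : Fin n} (h : (a, b) ∈ D) : arcT a b ∈ genSg D :=
  ⟨[(a, b)], List.cons_ne_nil _ _, by simpa using h, rfl⟩

lemma comp_mem_genSg {f g : Fin n → Fin n} (hf : f ∈ genSg D) (hg : g ∈ genSg D) :
    g ∘ f ∈ genSg D := by
  obtain ⟨l₁, hl₁, hD₁, rfl⟩ := hf
  obtain ⟨l₂, -, hD₂, rfl⟩ := hg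
  refine ⟨l₁ ++ l₂, by simp [hl₁], fun p hp => ?_, ?_⟩
  · rcases List.mem_append.1 hp with h | h
    exacts [hD₁ p h, hD₂ p h]
  · rw [List.foldl_append]
    exact (foldl_arcT_eq_comp _ _).symm

lemma le_lD {k : ℕ} {f : Fin n → Fin n} (hf : f ∈ genSg D) (hk : IsCycleOf f k) : k ≤ lD D := by
  refine le_csSup ⟨n, ?_⟩ ⟨f, hf, hk⟩
  rintro m ⟨-, -, hm, a, ha, -⟩
  have : NeZero m := ⟨hm.ne'⟩
  simpa using Fintype.card_le_of_injective a ha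

end ArcSemigroup

namespace SimpleGraph

variable {V : Type*} (G : SimpleGraph V)

def vertexBoundary (C : Set V) : Set V := {y | y ∉ C ∧ ∃ c ∈ C, G.Adj c y}

def closedNbhd (C : Set V) : Set V := C ∪ G.vertexBoundary C

def freeNbrs (C : Set V) (y : V) : Set V := G.neighborSet y \ G.closedNbhd C

def liveBoundary (C : Set V) : Set V := {y ∈ G.vertexBoundary C | (G.freeNbrs C y).Nonempty}

def degNeTwo : Set V := {v | (G.neighborSet v).ncard ≠ 2}

def IsConnectedSet (C : Set V) : Prop :=
  C.Nonempty ∧ ∀ a ∈ C, ∀ b ∈ C, ReflTransGen (fun p q => G.Adj p q ∧ q ∈ C) a b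

noncomputable def leafPotential (C : Set V) : ℤ :=
  4 * (G.vertexBoundary C).ncard - (G.degNeTwo ∩ G.closedNbhd C).ncard -
    (G.liveBoundary C).ncard

variable {G} {C : Set V} {u w : V}

lemma vertexBoundary_subset_closedNbhd : G.vertexBoundary C ⊆ G.closedNbhd C :=
  subset_union_right

lemma subset_closedNbhd : C ⊆ G.closedNbhd C := subset_union_left

lemma disjoint_closedNbhd_freeNbrs : Disjoint (G.closedNbhd C) (G.freeNbrs C u) :=
  disjoint_sdiff_right

lemma IsConnectedSet.insert_of_mem_vertexBoundary (hC : G.IsConnectedSet C)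
    (hu : u ∈ G.vertexBoundary C) : G.IsConnectedSet (insert u C) := by
  obtain ⟨hne, hreach⟩ := hC
  obtain ⟨-, c, hc, hcu⟩ := hu
  have lift {a b} (h : ReflTransGen (fun p q => G.Adj p q ∧ q ∈ C) a b) :
      ReflTransGen (fun p q => G.Adj p q ∧ q ∈ insert u C) a b :=
    ReflTransGen.mono (fun _ _ h => ⟨h.1, mem_insert_of_mem _ h.2⟩) _ _ h
  refine ⟨hne.mono (subset_insert _ _), ?_⟩
  rintro a (rfl | ha) b (rfl | hb)
  · exact .refl
  · exact .head ⟨hcu.symm, mem_insert_of_mem _ hc⟩ (lift (hreach c hc b hb))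
  · exact .tail (lift (hreach a ha c hc)) ⟨hcu, mem_insert _ _⟩
  · exact lift (hreach a ha b hb)

lemma vertexBoundary_insert :
    G.vertexBoundary (insert u C) = (G.vertexBoundary C \ {u}) ∪ G.freeNbrs C u := by
  ext y
  simp only [vertexBoundary, freeNbrs, closedNbhd, mem_insert_iff, mem_union, mem_sdiff,
    mem_ofPred_eq, mem_singleton_iff, mem_neighborSet, exists_eq_or_imp, not_or]
  constructor
  · rintro ⟨hy, huy | ⟨c, hc, hcy⟩⟩
    · by_cases hyC : ∃ c ∈ C, G.Adj c y
      · exact .inl ⟨⟨hy.2, hyC⟩, hy.1⟩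
      · exact .inr ⟨huy, hy.2, fun h => hyC h.2⟩
    · exact .inl ⟨⟨hy.2, c, hc, hcy⟩, hy.1⟩
  · rintro (⟨⟨hyC, hy⟩, hyu⟩ | ⟨huy, hy⟩)
    · exact ⟨⟨hyu, hyC⟩, .inr hy⟩
    · exact ⟨⟨fun h => G.ne_of_adj huy h.symm, hy.1⟩, .inl huy⟩

lemma closedNbhd_insert (hu : u ∈ G.vertexBoundary C) :
    G.closedNbhd (insert u C) = G.closedNbhd C ∪ G.freeNbrs C u := by
  have := vertexBoundary_subset_closedNbhd hu
  ext y
  simp only [closedNbhd, vertexBoundary_insert, mem_union, mem_insert_iff, mem_sdiff,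
    mem_singleton_iff]
  by_cases y = u <;> aesop

lemma freeNbrs_insert (hu : u ∈ G.vertexBoundary C) (y : V) :
    G.freeNbrs (insert u C) y = G.freeNbrs C y \ G.freeNbrs C u := by
  rw [freeNbrs, closedNbhd_insert hu, ← sdiff_sdiff]
  rfl

lemma nonempty_liveBoundary (hconn : G.Connected) (hC : G.IsConnectedSet C)
    (hcov : G.closedNbhd C ≠ univ) : (G.liveBoundary C).Nonempty := by
  obtain ⟨p, hp⟩ := (ne_univ_iff_exists_notMem _).1 hcov
  obtain ⟨a, ha⟩ := hC.1
  obtain ⟨d, -, hd, hd'⟩ :=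
    (hconn.preconnected a p).some.exists_boundary_dart _ (subset_closedNbhd ha) hp
  have hdC : d.fst ∉ C := fun h =>
    hd' (vertexBoundary_subset_closedNbhd ⟨fun h' => hd' (subset_closedNbhd h'), _, h, d.adj⟩)
  exact ⟨d.fst, hd.resolve_left hdC, d.snd, d.adj, hd'⟩

lemma leafPotential_of_closedNbhd_eq_univ (h : G.closedNbhd C = univ) :
    G.leafPotential C = 4 * (G.vertexBoundary C).ncard - G.degNeTwo.ncard := by
  have hlive : G.liveBoundary C = ∅ :=
    eq_empty_iff_forall_notMem.2 fun y hy => hy.2.some_mem.2 (h ▸ mem_univ _)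
  rw [leafPotential, h, inter_univ, hlive, ncard_empty, Nat.cast_zero, sub_zero]

lemma vertexBoundary_singleton (v : V) : G.vertexBoundary {v} = G.neighborSet v := by
  ext y
  simp only [vertexBoundary, mem_singleton_iff, exists_eq_left, mem_ofPred_eq, mem_neighborSet,
    and_iff_right_iff_imp]
  exact fun h => (G.ne_of_adj h).symm

lemma closedNbhd_singleton (v : V) : G.closedNbhd {v} = insert v (G.neighborSet v) := by
  rw [closedNbhd, vertexBoundary_singleton, singleton_union]

lemma isConnectedSet_singleton (v : V) : G.IsConnectedSet {v} :=
  ⟨singleton_nonempty v, by rintro a rfl b rfl; exact .refl⟩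

lemma adj_iff_not_adj_of_ncard_neighborSet_inter_eq_one {x y z : V} (hyz : y ≠ z)
    (h : (G.neighborSet x ∩ {x, y, z}).ncard = 1) : G.Adj x y ↔ ¬ G.Adj x z := by
  obtain ⟨m, hm⟩ := ncard_eq_one.1 h
  have key : ∀ q ∈ ({x, y, z} : Set V), (G.Adj x q ↔ q = m) := fun q hq => by
    rw [← mem_singleton_iff, ← hm]
    exact ⟨fun h => ⟨h, hq⟩, fun h => h.1⟩
  obtain ⟨hxm, hm'⟩ : m ∈ G.neighborSet x ∩ {x, y, z} := hm ▸ rfl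
  rw [key y (by simp), key z (by simp)]
  rcases hm' with rfl | rfl | rfl
  · exact absurd hxm (G.loopless.irrefl m)
  all_goals simp [hyz, hyz.symm]

lemma not_forall_ncard_neighborSet_inter_eq_one {a b c : V} (hab : a ≠ b) (hac : a ≠ c)
    (hbc : b ≠ c) : ¬ ∀ x ∈ ({a, b, c} : Set V), (G.neighborSet x ∩ {a, b, c}).ncard = 1 := by
  intro h
  have ha := adj_iff_not_adj_of_ncard_neighborSet_inter_eq_one hbc (h a (by simp))
  have hb := adj_iff_not_adj_of_ncard_neighborSet_inter_eq_one hac (x := b)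
    (by rw [insert_comm b a]; exact h b (by simp))
  have hc := adj_iff_not_adj_of_ncard_neighborSet_inter_eq_one hab (x := c)
    (by rw [insert_comm c a, pair_comm c b]; exact h c (by simp))
  rw [G.adj_comm b a] at hb
  rw [G.adj_comm c a, G.adj_comm c b] at hc
  tauto

lemma ncard_neighborSet_eq_degree [Fintype V] [DecidableRel G.Adj] (v : V) :
    (G.neighborSet v).ncard = G.degree v := by
  rw [← card_neighborSet_eq_degree, ← Nat.card_eq_fintype_card, Nat.card_coe_set_eq]

section Finite

variable [Finite V]

lemma ncard_neighborSet_eq (C : Set V) (y : V) :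
    (G.neighborSet y).ncard = (G.neighborSet y ∩ G.closedNbhd C).ncard + (G.freeNbrs C y).ncard :=
  (ncard_inter_add_ncard_sdiff_eq_ncard _ _).symm

lemma leafPotential_insert (hu : u ∈ G.vertexBoundary C) :
    G.leafPotential (insert u C) = G.leafPotential C + 4 * (G.freeNbrs C u).ncard - 4 -
      (G.degNeTwo ∩ G.freeNbrs C u).ncard + (G.liveBoundary C).ncard -
      (G.liveBoundary (insert u C)).ncard := by
  have hdisj : Disjoint (G.closedNbhd C) (G.freeNbrs C u) := disjoint_closedNbhd_freeNbrs
  have hbd : (G.vertexBoundary (insert u C)).ncard + 1 =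
      (G.vertexBoundary C).ncard + (G.freeNbrs C u).ncard := by
    rw [vertexBoundary_insert, ncard_union_eq (hdisj.mono_left
      (sdiff_subset.trans vertexBoundary_subset_closedNbhd)), add_right_comm,
      ncard_sdiff_singleton_add_one hu]
  have hdeg : (G.degNeTwo ∩ G.closedNbhd (insert u C)).ncard =
      (G.degNeTwo ∩ G.closedNbhd C).ncard + (G.degNeTwo ∩ G.freeNbrs C u).ncard := by
    rw [closedNbhd_insert hu, inter_union_distrib_left,
      ncard_union_eq (hdisj.mono inter_subset_right inter_subset_right)]
  simp only [leafPotential]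
  omega

/-- Inserting `u` kills each live vertex whose free neighbours are all free neighbours of `u`,
and only free neighbours of `u` can become live. -/
lemma ncard_liveBoundary_insert_le (hu : u ∈ G.vertexBoundary C) :
    (G.liveBoundary (insert u C)).ncard +
        {y ∈ G.liveBoundary C | G.freeNbrs C y ⊆ G.freeNbrs C u}.ncard ≤
      (G.liveBoundary C).ncard + (G.freeNbrs C u ∩ G.liveBoundary (insert u C)).ncard := by
  set D := {y ∈ G.liveBoundary C | G.freeNbrs C y ⊆ G.freeNbrs C u}
  have hsub : G.liveBoundary (insert u C) ⊆
      (G.liveBoundary C \ D) ∪ (G.freeNbrs C u ∩ G.liveBoundary (insert u C)) := by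
    intro y hy
    by_cases hyu : y ∈ G.freeNbrs C u
    · exact .inr ⟨hyu, hy⟩
    obtain ⟨hybd, o, ho⟩ := hy
    rw [vertexBoundary_insert] at hybd
    rw [freeNbrs_insert hu] at ho
    have hyC : y ∈ G.vertexBoundary C := (hybd.resolve_right hyu).1
    exact .inl ⟨⟨hyC, o, ho.1⟩, fun hD => ho.2 (hD.2 ho.1)⟩
  have hD : D ⊆ G.liveBoundary C := sep_subset _ _
  have := ncard_sdiff_add_ncard_of_subset hD
  have := (ncard_le_ncard hsub).trans (ncard_union_le _ _)
  omega

lemma leafPotential_insert_ge (hu : u ∈ G.liveBoundary C) :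
    G.leafPotential C + 2 * (G.freeNbrs C u).ncard - 3 ≤ G.leafPotential (insert u C) := by
  have h₁ := ncard_liveBoundary_insert_le hu.1
  have h₂ : 1 ≤ {y ∈ G.liveBoundary C | G.freeNbrs C y ⊆ G.freeNbrs C u}.ncard :=
    (ncard_pos).2 ⟨u, hu, subset_rfl⟩
  have h₃ := ncard_le_ncard (inter_subset_left (s := G.freeNbrs C u)
    (t := G.liveBoundary (insert u C)))
  have h₄ := ncard_le_ncard (inter_subset_right (s := G.degNeTwo) (t := G.freeNbrs C u))
  rw [leafPotential_insert hu.1]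
  omega

lemma leafPotential_le_insert (hu : u ∈ G.liveBoundary C) (hw : G.freeNbrs C u = {w})
    (h : w ∉ G.degNeTwo ∨ w ∉ G.liveBoundary (insert u C) ∨
      ∃ z ∈ G.liveBoundary C, z ≠ u ∧ G.freeNbrs C z ⊆ {w}) :
    G.leafPotential C ≤ G.leafPotential (insert u C) := by
  have hlive := ncard_liveBoundary_insert_le hu.1
  rw [leafPotential_insert hu.1, hw, ncard_singleton]
  rw [hw] at hlive
  set D := {y ∈ G.liveBoundary C | G.freeNbrs C y ⊆ {w}}
  have hD : 1 ≤ D.ncard := (ncard_pos).2 ⟨u, hu, hw.le⟩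
  have hdeg : (G.degNeTwo ∩ {w}).ncard ≤ 1 :=
    (ncard_le_ncard inter_subset_right).trans (ncard_singleton w).le
  have hw₁ : ({w} ∩ G.liveBoundary (insert u C)).ncard ≤ 1 :=
    (ncard_le_ncard inter_subset_left).trans (ncard_singleton w).le
  rcases h with hw' | hw' | ⟨z, hz, hzu, hzw⟩
  · rw [inter_singleton_eq_empty.2 hw', ncard_empty] at *
    omega
  · rw [singleton_inter_eq_empty.2 hw', ncard_empty] at *
    omega
  · have : ({z, u} : Set V).ncard ≤ D.ncard :=
      ncard_le_ncard (insert_subset ⟨hz, hzw⟩ (singleton_subset_iff.2 ⟨hu, hw.le⟩))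
    rw [ncard_pair hzu] at this
    omega

/-- A second boundary neighbour `z` of `w`, which dies together with `u`; it exists because
`w` has degree `≠ 2`. -/
lemma exists_mem_liveBoundary_freeNbrs_subset_singleton
    (hle : ∀ y ∈ G.liveBoundary C, (G.freeNbrs C y).ncard ≤ 1)
    (hu : u ∈ G.liveBoundary C) (hw : G.freeNbrs C u = {w}) (hdeg : w ∈ G.degNeTwo)
    (hlive : w ∈ G.liveBoundary (insert u C)) (hfree : (G.freeNbrs (insert u C) w).ncard ≤ 1) :
    ∃ z ∈ G.liveBoundary C, z ≠ u ∧ G.freeNbrs C z ⊆ {w} := by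
  have hwu : w ∈ G.freeNbrs C u := hw ▸ rfl
  have hfw : G.freeNbrs (insert u C) w = G.freeNbrs C w := by
    rw [freeNbrs_insert hu.1, hw, sdiff_singleton_eq_self fun h => G.loopless.irrefl w h.1]
  rw [hfw] at hfree
  have hfree₁ : (G.freeNbrs C w).ncard = 1 := le_antisymm hfree ((ncard_pos).2 (hfw ▸ hlive.2))
  obtain ⟨z, ⟨hzw, hzcov⟩, hzu⟩ : ∃ z ∈ G.neighborSet w ∩ G.closedNbhd C, z ≠ u := by
    by_contra! h
    have : G.neighborSet w ∩ G.closedNbhd C = {u} :=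
      eq_singleton_iff_unique_mem.2 ⟨⟨hwu.1.symm, vertexBoundary_subset_closedNbhd hu.1⟩, h⟩
    exact hdeg (by rw [ncard_neighborSet_eq C, this, ncard_singleton, hfree₁])
  have hzC : z ∉ C := fun hz => hwu.2 (vertexBoundary_subset_closedNbhd
    ⟨fun hw => hwu.2 (subset_closedNbhd hw), z, hz, G.adj_symm hzw⟩)
  have hz : z ∈ G.liveBoundary C :=
    ⟨hzcov.resolve_left hzC, w, G.adj_symm hzw, hwu.2⟩
  exact ⟨z, hz, hzu, fun y hy => (ncard_le_one).1 (hle z hz) _ hy _ ⟨G.adj_symm hzw, hwu.2⟩⟩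

lemma exists_ssuperset_leafPotential_le (hconn : G.Connected) (hC : G.IsConnectedSet C)
    (hcov : G.closedNbhd C ≠ univ) :
    ∃ C', C ⊂ C' ∧ G.IsConnectedSet C' ∧ G.leafPotential C ≤ G.leafPotential C' := by
  by_cases hle : ∀ u ∈ G.liveBoundary C, (G.freeNbrs C u).ncard ≤ 1
  swap
  · simp only [not_forall, not_le] at hle
    obtain ⟨u, hu, h2⟩ := hle
    refine ⟨insert u C, ssubset_insert hu.1.1, hC.insert_of_mem_vertexBoundary hu.1, ?_⟩
    have := leafPotential_insert_ge hu
    omega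
  obtain ⟨u, hu⟩ := nonempty_liveBoundary hconn hC hcov
  obtain ⟨w, hw⟩ := ncard_eq_one.1 (le_antisymm (hle u hu) ((ncard_pos).2 hu.2))
  have hwbd : w ∈ G.vertexBoundary (insert u C) := by
    rw [vertexBoundary_insert, hw]
    exact .inr rfl
  have hC₁ := hC.insert_of_mem_vertexBoundary hu.1
  by_cases htwo : 2 ≤ (G.freeNbrs (insert u C) w).ncard
  · have hwl : w ∈ G.liveBoundary (insert u C) := ⟨hwbd, (ncard_pos).1 (by omega)⟩
    refine ⟨insert w (insert u C), (ssubset_insert hu.1.1).trans_subset (subset_insert _ _),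
      hC₁.insert_of_mem_vertexBoundary hwbd, ?_⟩
    have h₁ := leafPotential_insert_ge hu
    have h₂ := leafPotential_insert_ge hwl
    rw [hw, ncard_singleton] at h₁
    omega
  · refine ⟨insert u C, ssubset_insert hu.1.1, hC₁, leafPotential_le_insert hu hw
      (or_iff_not_imp_left.2 fun hd => or_iff_not_imp_left.2 fun hl => ?_)⟩
    exact exists_mem_liveBoundary_freeNbrs_subset_singleton hle hu hw (not_not.1 hd)
      (not_not.1 hl) (by omega)

lemma exists_closedNbhd_eq_univ (hconn : G.Connected) (hC : G.IsConnectedSet C)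
    (h6 : 6 ≤ G.leafPotential C) :
    ∃ C', G.IsConnectedSet C' ∧ G.closedNbhd C' = univ ∧ 6 ≤ G.leafPotential C' := by
  induction C using WellFoundedGT.induction with
  | _ C ih =>
    by_cases hcov : G.closedNbhd C = univ
    · exact ⟨C, hC, hcov, h6⟩
    obtain ⟨C', hCC', hC', hle⟩ := exists_ssuperset_leafPotential_le hconn hC hcov
    exact ih C' hCC' hC' (h6.trans hle)

/-- Handshake: a connected graph has at least `|V| - 1` edges, so at most two vertices of degree
less than two when no degree exceeds two. -/
lemma exists_three_le_ncard_neighborSet (hconn : G.Connected) (ht : 3 ≤ G.degNeTwo.ncard) :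
    ∃ v, 3 ≤ (G.neighborSet v).ncard := by
  classical
  have := Fintype.ofFinite V
  by_contra! h
  have hle : ∀ v, G.degree v + (if v ∈ G.degNeTwo then 1 else 0) ≤ 2 := fun v => by
    have := h v
    rw [ncard_neighborSet_eq_degree] at this
    split_ifs with hv
    · rw [degNeTwo, mem_ofPred_eq, ncard_neighborSet_eq_degree] at hv
      omega
    · omega
  have hsum := Finset.sum_le_sum fun v (_ : v ∈ Finset.univ) => hle v
  rw [Finset.sum_add_distrib, G.sum_degrees_eq_twice_card_edges, Finset.sum_boole,
    Nat.cast_id, Finset.sum_const, smul_eq_mul, Finset.card_univ] at hsum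
  have hedges := hconn.card_vert_le_card_edgeSet_add_one
  rw [Nat.card_eq_fintype_card, Nat.card_eq_fintype_card, ← edgeFinset_card] at hedges
  have hT : (Finset.univ.filter (· ∈ G.degNeTwo)).card = G.degNeTwo.ncard := by
    rw [← ncard_coe_finset, Finset.coe_filter_univ]
    rfl
  omega

lemma leafPotential_singleton_bounds (v : V) :
    (G.degNeTwo ∩ insert v (G.neighborSet v)).ncard ≤ (G.neighborSet v).ncard + 1 ∧
      (G.liveBoundary {v}).ncard ≤ (G.neighborSet v).ncard := by
  refine ⟨(ncard_le_ncard inter_subset_right).trans (ncard_insert_le _ _), ncard_le_ncard ?_⟩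
  exact fun y hy => vertexBoundary_singleton (G := G) v ▸ hy.1

lemma two_mul_sub_one_le_leafPotential_singleton (v : V) :
    2 * ((G.neighborSet v).ncard : ℤ) - 1 ≤ G.leafPotential {v} := by
  have := leafPotential_singleton_bounds (G := G) v
  rw [leafPotential, vertexBoundary_singleton, closedNbhd_singleton]
  omega

/-- With maximum degree `3` and `G.leafPotential {v} ≤ 5`, the closed neighbourhood of `v` has
no vertex of degree `2` and every neighbour is live; if none had two free neighbours, each
neighbour of `v` would be adjacent to exactly one other, impossible on three vertices. -/
lemma exists_two_le_freeNbrs_singleton (hmax : ∀ x, (G.neighborSet x).ncard ≤ 3) {v : V}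
    (hv : (G.neighborSet v).ncard = 3) (h5 : G.leafPotential {v} < 6) :
    ∃ u ∈ G.liveBoundary {v}, 2 ≤ (G.freeNbrs {v} u).ncard := by
  have hvv : v ∉ G.neighborSet v := G.loopless.irrefl v
  have hN : (insert v (G.neighborSet v)).ncard = 4 := by rw [ncard_insert_of_notMem hvv, hv]
  have hbounds := leafPotential_singleton_bounds (G := G) v
  have hLsub : G.liveBoundary {v} ⊆ G.neighborSet v :=
    fun y hy => vertexBoundary_singleton (G := G) v ▸ hy.1
  have hTsub := inter_subset_right (s := G.degNeTwo) (t := insert v (G.neighborSet v))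
  rw [leafPotential, vertexBoundary_singleton, closedNbhd_singleton] at h5
  have hT : G.degNeTwo ∩ insert v (G.neighborSet v) = insert v (G.neighborSet v) :=
    eq_of_subset_of_ncard_le hTsub (by omega)
  have hL : G.liveBoundary {v} = G.neighborSet v := eq_of_subset_of_ncard_le hLsub (by omega)
  by_contra! hsmall
  obtain ⟨a, b, c, hab, hac, hbc, habc⟩ := ncard_eq_three.1 hv
  refine not_forall_ncard_neighborSet_inter_eq_one (G := G) hab hac hbc ?_
  rw [← habc]
  intro u hu
  have hul : u ∈ G.liveBoundary {v} := hL ▸ hu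
  have hfree := hsmall u hul
  have hfree' := (ncard_pos).2 hul.2
  have hdeg : u ∈ G.degNeTwo := (hT.symm.subset (mem_insert_of_mem v hu)).1
  have hsplit := ncard_neighborSet_eq (G := G) {v} u
  rw [closedNbhd_singleton, inter_insert_of_mem (show v ∈ G.neighborSet u from G.adj_symm hu),
    ncard_insert_of_notMem fun h => hvv h.2] at hsplit
  have := hmax u
  have : (G.neighborSet u).ncard ≠ 2 := hdeg
  omega

lemma exists_leafPotential_ge_six (hconn : G.Connected) (ht : 3 ≤ G.degNeTwo.ncard) :
    ∃ C, G.IsConnectedSet C ∧ 6 ≤ G.leafPotential C := by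
  have : Nonempty V := ⟨(nonempty_of_ncard_ne_zero (s := G.degNeTwo) (by omega)).some⟩
  obtain ⟨v, hvmax⟩ := Finite.exists_max fun v => (G.neighborSet v).ncard
  obtain ⟨v₀, hv₀⟩ := exists_three_le_ncard_neighborSet hconn ht
  have h3 := hv₀.trans (hvmax v₀)
  have hφ := two_mul_sub_one_le_leafPotential_singleton (G := G) v
  by_cases h6 : 6 ≤ G.leafPotential {v}
  · exact ⟨{v}, isConnectedSet_singleton v, h6⟩
  have hv : (G.neighborSet v).ncard = 3 := by omega
  obtain ⟨u, hu, h2⟩ := exists_two_le_freeNbrs_singleton (fun x => hv ▸ hvmax x) hv (by omega)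
  refine ⟨insert u {v}, (isConnectedSet_singleton v).insert_of_mem_vertexBoundary hu.1, ?_⟩
  have := leafPotential_insert_ge hu
  omega

end Finite

end SimpleGraph

section GraphSemigroup

variable {n : ℕ} {G : SimpleGraph (Fin n)} {C : Set (Fin n)}

/-- Walking from `c` through `C` and stepping out to `b` transports `c` to `b`; every arc used
starts in `C`, so points outside `C` never move. -/
lemma exists_genSg_apply_of_reflTransGen {c c' b : Fin n}
    (h : ReflTransGen (fun p q => G.Adj p q ∧ q ∈ C) c c') (hc : c ∈ C) (hb : G.Adj c' b) :
    ∃ f ∈ genSg (arcsOf G), f c = b ∧ ∀ z ∉ C, f z = z := by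
  induction h using ReflTransGen.head_induction_on with
  | refl =>
    refine ⟨arcT c' b, arcT_mem_genSg hb, if_pos rfl, fun z hz => if_neg ?_⟩
    rintro rfl
    exact hz hc
  | @head c d hcd _ ih =>
    obtain ⟨f, hf, hfc, hfix⟩ := ih hcd.2
    refine ⟨f ∘ arcT c d, comp_mem_genSg (arcT_mem_genSg hcd.1) hf, ?_, fun z hz => ?_⟩
    · simp [arcT, hfc]
    · rw [Function.comp_apply, arcT, if_neg (by rintro rfl; exact hz hc), hfix z hz]

lemma exists_genSg_apply_of_mem_vertexBoundary (hC : G.IsConnectedSet C) {a b : Fin n}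
    (ha : a ∈ G.vertexBoundary C) (hb : b ∈ G.vertexBoundary C) :
    ∃ f ∈ genSg (arcsOf G), f a = b ∧ ∀ z ∉ C, z ≠ a → f z = z := by
  obtain ⟨-, c, hc, hca⟩ := ha
  obtain ⟨-, c', hc', hc'b⟩ := hb
  obtain ⟨f, hf, hfc, hfix⟩ :=
    exists_genSg_apply_of_reflTransGen (hC.2 c hc c' hc') hc hc'b
  refine ⟨f ∘ arcT a c, comp_mem_genSg (arcT_mem_genSg (G.adj_symm hca)) hf, ?_, ?_⟩
  · simp [arcT, hfc]
  · intro z hz hza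
    rw [Function.comp_apply, arcT, if_neg hza, hfix z hz]

lemma le_lG_of_isConnectedSet (hC : G.IsConnectedSet C) {k : ℕ} (hk : 0 < k)
    (hkC : k + 1 ≤ (G.vertexBoundary C).ncard) : k ≤ lG G := by
  have : Nonempty (Fin n) :=
    ⟨(nonempty_of_ncard_ne_zero (s := G.vertexBoundary C) (by omega)).some⟩
  obtain ⟨x, hX, hx⟩ := (finite_Iic k).exists_injOn_of_encard_le (t := G.vertexBoundary C) (by
    rw [← (finite_Iic k).cast_ncard_eq, ← (toFinite _).cast_ncard_eq, ncard_Iic_nat]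
    exact_mod_cast hkC)
  obtain ⟨f, hf, hcyc⟩ := exists_isCycleOf (fun f hf g hg => comp_mem_genSg hf hg)
    (fun a ha b hb => (exists_genSg_apply_of_mem_vertexBoundary hC ha hb).imp
      fun f ⟨hf, hfa, hfix⟩ => ⟨hf, hfa, fun z hz => hfix z hz.1⟩) hk (fun i hi => hX hi) hx
  exact le_lD hf hcyc

/-- A fixed point is a cycle of length one. -/
lemma one_le_lG {u v : Fin n} (huv : G.Adj u v) : 1 ≤ lG G :=
  le_lD (arcT_mem_genSg huv) ⟨one_pos, fun _ => v, Function.injective_of_subsingleton _,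
    fun _ => by simp [arcT]⟩

lemma ncard_degNeTwo_add_two_le_four_mul_lG (hconn : G.Connected)
    (ht : 3 ≤ G.degNeTwo.ncard) : G.degNeTwo.ncard + 2 ≤ 4 * lG G := by
  obtain ⟨C₀, hC₀, h₀⟩ := G.exists_leafPotential_ge_six hconn ht
  obtain ⟨C, hC, hcov, h6⟩ := G.exists_closedNbhd_eq_univ hconn hC₀ h₀
  rw [SimpleGraph.leafPotential_of_closedNbhd_eq_univ hcov] at h6
  have := le_lG_of_isConnectedSet hC (k := (G.vertexBoundary C).ncard - 1) (by omega) (by omega)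
  omega

end GraphSemigroup

/-- If `G` is connected with `t` vertices of degree `≠ 2`, then
`l(G) ≥ (t-2)/4 + 1`. -/
theorem stmt5 (n : ℕ) (G : SimpleGraph (Fin n)) (hconn : G.Connected)
    (hedge : ∃ u v, G.Adj u v) (t : ℕ)
    (ht : t = { v : Fin n | (G.neighborSet v).ncard ≠ 2 }.ncard) :
    ((t : ℚ) - 2) / 4 + 1 ≤ (lG G : ℚ) := by
  change t = G.degNeTwo.ncard at ht
  obtain ⟨u, v, huv⟩ := hedge
  rcases Nat.lt_or_ge t 3 with hsmall | hbig
  · have h₁ : (1 : ℚ) ≤ lG G := by exact_mod_cast one_le_lG huv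
    have h₂ : (t : ℚ) ≤ 2 := by exact_mod_cast Nat.le_of_lt_succ hsmall
    linarith
  · have h : ((t + 2 : ℕ) : ℚ) ≤ (4 * lG G : ℕ) := by
      exact_mod_cast ht ▸ ncard_degNeTwo_add_two_le_four_mul_lG hconn (ht ▸ hbig)
    push_cast at h
    linarith
end
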